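/- arXiv:1406.6740 — 2 statements merged into one kernel-verified Lean document; each statement's English description precedes it below -/
import Mathlib

section
/- Assume the forward spiral condition: V_{N+k} = M·T(V_{k−1}) for all k ≥ 1. For i ∈ ℤ let u_i := (c_i, 0, a_i)ᵀ and let 𝒜_{i+1} be the 3×3 matrix with columns d_{i−1}·u_{i−1}, d_i·K_{i−1}·u_i, and d_{i+1}·K_{i−1}·K_i·u_{i+1}. Then for every integer i ≥ 1 such that 𝒜_i is invertible, K_{N+i} = 𝒜_i⁻¹·K_{i−2}·𝒜_{i+1}. -/
open Matrix

/-- The 3×3 matrix with columns `u, v, w`. -/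
def colMat (u v w : Fin 3 → ℝ) : Matrix (Fin 3) (Fin 3) ℝ :=
  Matrix.of fun i j => ![u, v, w] j i

lemma mul_colMat (A : Matrix (Fin 3) (Fin 3) ℝ) (x y z : Fin 3 → ℝ) :
    A * colMat x y z = colMat (A.mulVec x) (A.mulVec y) (A.mulVec z) := by
  ext i j
  fin_cases j <;>
    simp [colMat, Matrix.mul_apply, Matrix.mulVec, dotProduct, Fin.sum_univ_three]

lemma colMat_mulVec (x y z v : Fin 3 → ℝ) :
    (colMat x y z).mulVec v = v 0 • x + v 1 • y + v 2 • z := by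
  funext i
  simp [colMat, Matrix.mulVec, dotProduct, Fin.sum_univ_three]
  ring

lemma cross_id (p q r : Fin 3 → ℝ) (A B C : ℝ) :
    crossProduct (crossProduct p r) (crossProduct q (A • r + B • q + C • p)) =
      (colMat p q r).det • (C • p + A • r) := by
  funext i
  fin_cases i <;>
    simp [cross_apply, colMat, Matrix.det_fin_three] <;> ring

/-- under the forward spiral condition `V_{N+k} = M·T(V_{k−1})` for
all `k ≥ 1`, with `𝒜_{i+1}` the matrix with columns `d_{i−1}·u_{i−1}`,
`d_i·K_{i−1}·u_i`, `d_{i+1}·K_{i−1}·K_i·u_{i+1}` where `u_i = (c_i, 0, a_i)ᵀ`,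
one has `K_{N+i} = 𝒜_i⁻¹·K_{i−2}·𝒜_{i+1}` for every integer `i ≥ 1` with `𝒜_i`
invertible. -/
theorem K_forward_gauge (N : ℕ) (hN : 5 ≤ N)
    (V : ℤ → Fin 3 → ℝ) (a b c : ℤ → ℝ)
    (hrec : ∀ j : ℤ, V (j + 3) = a j • V (j + 2) + b j • V (j + 1) + c j • V j)
    (ρ : ℤ → Matrix (Fin 3) (Fin 3) ℝ)
    (hρ : ∀ j : ℤ, ρ j = colMat (V j) (V (j + 1)) (V (j + 2)))
    (hρinv : ∀ j : ℤ, IsUnit (ρ j))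
    (d : ℤ → ℝ) (hd : ∀ j : ℤ, d j = (ρ j).det)
    (K : ℤ → Matrix (Fin 3) (Fin 3) ℝ)
    (hK : ∀ j : ℤ, K j = !![0, 0, c j; 1, 0, b j; 0, 1, a j])
    (M : Matrix (Fin 3) (Fin 3) ℝ) (hM : M.det = 1)
    (T : ℤ → Fin 3 → ℝ)
    (hT : ∀ j : ℤ, T j =
      crossProduct (crossProduct (V (j - 1)) (V (j + 1))) (crossProduct (V j) (V (j + 2))))
    (hfwd : ∀ k : ℤ, 1 ≤ k → V ((N : ℤ) + k) = M.mulVec (T (k - 1)))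
    (u : ℤ → Fin 3 → ℝ) (hu : ∀ i : ℤ, u i = ![c i, 0, a i])
    (𝒜 : ℤ → Matrix (Fin 3) (Fin 3) ℝ)
    (h𝒜 : ∀ i : ℤ, 𝒜 (i + 1) =
      colMat (d (i - 1) • u (i - 1)) (d i • (K (i - 1)).mulVec (u i))
        (d (i + 1) • ((K (i - 1) * K i).mulVec (u (i + 1))))) :
    ∀ i : ℤ, 1 ≤ i → IsUnit (𝒜 i) →
      K ((N : ℤ) + i) = (𝒜 i)⁻¹ * K (i - 2) * 𝒜 (i + 1) := by
  -- Step 1: the transfer-matrix relation ρ_{j+1} = ρ_j K_j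
  have hstep : ∀ j : ℤ, ρ (j + 1) = ρ j * K j := by
    intro j
    rw [hρ, hρ, hK]
    simp only [show (j : ℤ) + 1 + 1 = j + 2 from by ring,
      show (j : ℤ) + 1 + 2 = j + 3 from by ring, hrec j]
    ext i m
    fin_cases m <;>
      simp [colMat, Matrix.mul_apply, Fin.sum_univ_three] <;> ring
  -- Step 2: formula for T
  have hTf : ∀ j : ℤ, T j = d (j - 1) • (ρ (j - 1)).mulVec (u (j - 1)) := by
    intro j
    have h2 : V (j + 2) = a (j - 1) • V (j + 1) + b (j - 1) • V j + c (j - 1) • V (j - 1) := by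
      have := hrec (j - 1)
      simpa [show (j : ℤ) - 1 + 3 = j + 2 from by ring,
        show (j : ℤ) - 1 + 2 = j + 1 from by ring,
        show (j : ℤ) - 1 + 1 = j from by ring] using this
    rw [hT, hd, hρ, hu, h2]
    simp only [show (j : ℤ) - 1 + 1 = j from by ring,
      show (j : ℤ) - 1 + 2 = j + 1 from by ring]
    rw [colMat_mulVec]
    simpa using cross_id (V (j - 1)) (V j) (V (j + 1)) (a (j - 1)) (b (j - 1)) (c (j - 1))
  -- Step 3: formula for V_{N+k}
  have hV : ∀ k : ℤ, 1 ≤ k →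
      V ((N : ℤ) + k) = d (k - 2) • (M * ρ (k - 2)).mulVec (u (k - 2)) := by
    intro k hk
    rw [hfwd k hk, hTf]
    simp only [show (k : ℤ) - 1 - 1 = k - 2 from by ring]
    rw [Matrix.mulVec_smul, Matrix.mulVec_mulVec]
  -- Step 4: ρ_{N+i} = M ρ_{i-2} 𝒜_i
  have hρN : ∀ i : ℤ, 1 ≤ i → ρ ((N : ℤ) + i) = M * ρ (i - 2) * 𝒜 i := by
    intro i hi
    have hA : 𝒜 i = colMat (d (i - 2) • u (i - 2)) (d (i - 1) • (K (i - 2)).mulVec (u (i - 1)))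
        (d i • ((K (i - 2) * K (i - 1)).mulVec (u i))) := by
      have := h𝒜 (i - 1)
      simpa [show (i : ℤ) - 1 + 1 = i from by ring,
        show (i : ℤ) - 1 - 1 = i - 2 from by ring] using this
    have hρ1 : ρ (i - 1) = ρ (i - 2) * K (i - 2) := by
      have := hstep (i - 2)
      simpa [show (i : ℤ) - 2 + 1 = i - 1 from by ring] using this
    have hρ0 : ρ i = ρ (i - 2) * K (i - 2) * K (i - 1) := by
      have := hstep (i - 1)
      rw [show (i : ℤ) - 1 + 1 = i from by ring] at this
      rw [this, hρ1]
    have hc1 : V ((N : ℤ) + i) = (M * ρ (i - 2)).mulVec (d (i - 2) • u (i - 2)) := by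
      rw [Matrix.mulVec_smul]; exact hV i hi
    have hc2 : V ((N : ℤ) + i + 1) =
        (M * ρ (i - 2)).mulVec (d (i - 1) • (K (i - 2)).mulVec (u (i - 1))) := by
      have h := hV (i + 1) (by omega)
      rw [show (N : ℤ) + (i + 1) = N + i + 1 from by ring,
        show (i : ℤ) + 1 - 2 = i - 1 from by ring] at h
      rw [h, Matrix.mulVec_smul, Matrix.mulVec_mulVec, Matrix.mul_assoc, ← hρ1]
    have hc3 : V ((N : ℤ) + i + 2) =
        (M * ρ (i - 2)).mulVec (d i • ((K (i - 2) * K (i - 1)).mulVec (u i))) := by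
      have h := hV (i + 2) (by omega)
      rw [show (N : ℤ) + (i + 2) = N + i + 2 from by ring,
        show (i : ℤ) + 2 - 2 = i from by ring] at h
      rw [h, Matrix.mulVec_smul, Matrix.mulVec_mulVec, Matrix.mul_assoc, ← Matrix.mul_assoc (ρ (i-2)), ← hρ0]
    rw [hρ ((N : ℤ) + i), hA, mul_colMat, hc1, hc2, hc3]
  -- Final assembly
  intro i hi hAi
  haveI : Invertible M := Matrix.invertibleOfIsUnitDet M (by rw [hM]; exact isUnit_one)
  haveI : Invertible (ρ (i - 2)) :=
    Matrix.invertibleOfIsUnitDet _ ((Matrix.isUnit_iff_isUnit_det _).mp (hρinv _))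
  have hdet : IsUnit (ρ ((N : ℤ) + i)).det := (Matrix.isUnit_iff_isUnit_det _).mp (hρinv _)
  have h1 : ρ ((N : ℤ) + i) = M * ρ (i - 2) * 𝒜 i := hρN i hi
  have h2 : ρ ((N : ℤ) + i + 1) = M * ρ (i - 1) * 𝒜 (i + 1) := by
    have h := hρN (i + 1) (by omega)
    rw [show (N : ℤ) + (i + 1) = N + i + 1 from by ring,
      show (i : ℤ) + 1 - 2 = i - 1 from by ring] at h
    exact h
  have hρ1 : ρ (i - 1) = ρ (i - 2) * K (i - 2) := by
    have := hstep (i - 2)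
    simpa [show (i : ℤ) - 2 + 1 = i - 1 from by ring] using this
  have hKN : K ((N : ℤ) + i) = (ρ ((N : ℤ) + i))⁻¹ * ρ ((N : ℤ) + i + 1) := by
    rw [hstep ((N : ℤ) + i), ← Matrix.mul_assoc, Matrix.nonsing_inv_mul _ hdet, Matrix.one_mul]
  rw [hKN, h1, h2, hρ1, Matrix.mul_inv_rev, Matrix.mul_inv_rev]
  simp only [Matrix.mul_assoc]
  rw [Matrix.inv_mul_cancel_left_of_invertible, Matrix.inv_mul_cancel_left_of_invertible]
end

section
/- Assume the forward spiral condition V_{N+k} = M·T(V_{k−1}) for all k ≥ 1 and the normalization det ρ_j = 1 for j = 0, 1, …, N (which forces c_j = 1 for 0 ≤ j ≤ N−1 and d_{−1} = 1/c_{−1}). Set A_0 := 1 + a_0·b_{−1} and A_2 := 1 + a_2·b_1, and assume A_0 ≠ 0. Then the recursion coefficients at index N+1 satisfy a_{N+1} = a_2, b_{N+1} = b_{−1}·A_2/A_0, and c_{N+1} = c_{−1}·A_2/A_0. -/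
open Matrix

/-!
Write `T j` for `T(V_j)` and `d_j = det ρ_j`. Expanding the vector triple product and using the
recursion gives `d_{j+1} = c_j d_j` and `T (j + 1) = d_j (V_{j+3} - b_j V_{j+1})`. The
normalization `d_0 = ⋯ = d_3 = 1` thus yields `c_0 = c_1 = c_2 = 1`, `c_{-1} d_{-1} = 1`, and then
`T 3 - a_2 T 2 = A_2 V_2` and `b_{-1} T 1 + c_{-1} T 0 = A_0 V_2`, so
`T 3 = a_2 T 2 + b_{-1} (A_2/A_0) T 1 + c_{-1} (A_2/A_0) T 0`.
On the other side, `V_{N+k} = M T (k - 1)` turns the recursion at `N + 1` into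
`T 3 = a_{N+1} T 2 + b_{N+1} T 1 + c_{N+1} T 0`, and `T 0, T 1, T 2` are linearly independent
since `M · colMat (T 0) (T 1) (T 2) = ρ_{N+1}` is invertible. Compare coefficients.
-/

section CrossProduct

variable {R : Type*} [CommRing R]

theorem triple_product_swap (u v w : Fin 3 → R) : v ⬝ᵥ u ⨯₃ w = -(u ⬝ᵥ v ⨯₃ w) := by
  rw [triple_product_permutation, ← cross_anticomm, dotProduct_neg]

theorem triple_product_of_eq_add_smul {u v w x : Fin 3 → R} {α β γ : R}
    (hx : x = α • w + β • v + γ • u) :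
    v ⬝ᵥ w ⨯₃ x = γ * (u ⬝ᵥ v ⨯₃ w) := by
  simp only [hx, map_add, map_smul, cross_self, dotProduct_add, dotProduct_smul, dot_cross_self,
    smul_zero, zero_add, smul_eq_mul, mul_zero, triple_product_permutation u]

theorem cross_cross_cross_of_eq_add_smul {u v w x : Fin 3 → R} {α β γ : R}
    (hx : x = α • w + β • v + γ • u) :
    u ⨯₃ w ⨯₃ (v ⨯₃ x) = (u ⬝ᵥ v ⨯₃ w) • (x - β • v) := by
  have hux : u ⨯₃ w ⬝ᵥ x = -β * (u ⬝ᵥ v ⨯₃ w) := by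
    rw [dotProduct_comm, hx]
    simp only [add_dotProduct, smul_dotProduct, dot_cross_self, dot_self_cross,
      smul_eq_mul, mul_zero, add_zero, zero_add]
    rw [triple_product_swap]
    ring
  rw [cross_cross_eq_smul_sub_smul', hux, triple_product_swap]
  module

end CrossProduct

section ColMat

theorem det_colMat (u v w : Fin 3 → ℝ) : (colMat u v w).det = u ⬝ᵥ v ⨯₃ w := by
  rw [triple_product_eq_det]
  exact det_transpose _

theorem mul_colMat_s8 (A : Matrix (Fin 3) (Fin 3) ℝ) (u v w : Fin 3 → ℝ) :
    A * colMat u v w = colMat (A *ᵥ u) (A *ᵥ v) (A *ᵥ w) := by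
  ext i j
  fin_cases j <;> simp [colMat, mul_apply, mulVec, dotProduct]

theorem colMat_mulVec_s8 (u v w s : Fin 3 → ℝ) :
    colMat u v w *ᵥ s = s 0 • u + s 1 • v + s 2 • w := by
  ext i
  simp [colMat, mulVec, dotProduct, Fin.sum_univ_three, mul_comm]

theorem coeffs_eq_of_isUnit_colMat {u v w : Fin 3 → ℝ} (h : IsUnit (colMat u v w))
    {α β γ α' β' γ' : ℝ} (heq : α • w + β • v + γ • u = α' • w + β' • v + γ' • u) :
    α = α' ∧ β = β' ∧ γ = γ' := by
  have hcomb (x y z : ℝ) : colMat u v w *ᵥ ![z, y, x] = x • w + y • v + z • u := by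
    simp only [colMat_mulVec_s8, cons_val_zero, cons_val_one, cons_val]
    abel
  have hs := mulVec_injective_iff_isUnit.mpr h
    ((hcomb α β γ).trans (heq.trans (hcomb α' β' γ').symm))
  simp only [vecCons_inj] at hs
  exact ⟨hs.2.2.1, hs.2.1, hs.1⟩

end ColMat

section Spiral

variable {V : ℤ → Fin 3 → ℝ} {a b c : ℤ → ℝ} {ρ : ℤ → Matrix (Fin 3) (Fin 3) ℝ}
  {T : ℤ → Fin 3 → ℝ}

theorem det_succ_eq_mul_det
    (hrec : ∀ j : ℤ, V (j + 3) = a j • V (j + 2) + b j • V (j + 1) + c j • V j)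
    (hρ : ∀ j : ℤ, ρ j = colMat (V j) (V (j + 1)) (V (j + 2))) (j : ℤ) :
    (ρ (j + 1)).det = c j * (ρ j).det := by
  rw [hρ, hρ, det_colMat, det_colMat, show j + 1 + 1 = j + 2 by ring,
    show j + 1 + 2 = j + 3 by ring]
  exact triple_product_of_eq_add_smul (hrec j)

theorem T_succ_eq_det_smul
    (hrec : ∀ j : ℤ, V (j + 3) = a j • V (j + 2) + b j • V (j + 1) + c j • V j)
    (hρ : ∀ j : ℤ, ρ j = colMat (V j) (V (j + 1)) (V (j + 2)))
    (hT : ∀ j : ℤ, T j =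
      crossProduct (crossProduct (V (j - 1)) (V (j + 1))) (crossProduct (V j) (V (j + 2))))
    (j : ℤ) :
    T (j + 1) = (ρ j).det • (V (j + 3) - b j • V (j + 1)) := by
  rw [hT, hρ, det_colMat, add_sub_cancel_right, show j + 1 + 1 = j + 2 by ring,
    show j + 1 + 2 = j + 3 by ring]
  exact cross_cross_cross_of_eq_add_smul (hrec j)

theorem T_three_eq_of_det_eq_one
    (hrec : ∀ j : ℤ, V (j + 3) = a j • V (j + 2) + b j • V (j + 1) + c j • V j)
    (hρ : ∀ j : ℤ, ρ j = colMat (V j) (V (j + 1)) (V (j + 2)))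
    (hT : ∀ j : ℤ, T j =
      crossProduct (crossProduct (V (j - 1)) (V (j + 1))) (crossProduct (V j) (V (j + 2))))
    (hnorm : ∀ j : ℤ, 0 ≤ j → j ≤ 3 → (ρ j).det = 1) (hA0 : 1 + a 0 * b (-1) ≠ 0) :
    T 3 = a 2 • T 2 + (b (-1) * (1 + a 2 * b 1) / (1 + a 0 * b (-1))) • T 1 +
      (c (-1) * (1 + a 2 * b 1) / (1 + a 0 * b (-1))) • T 0 := by
  have hdet := det_succ_eq_mul_det hrec hρ
  have hTd := T_succ_eq_det_smul hrec hρ hT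
  have hc : ∀ j : ℤ, 0 ≤ j → j ≤ 2 → c j = 1 := fun j h0 h2 => by
    simpa [hnorm j h0 (by omega), hnorm (j + 1) (by omega) (by omega)] using (hdet j).symm
  have hcd : c (-1) * (ρ (-1)).det = 1 := by
    simpa [hnorm 0 le_rfl (by norm_num)] using (hdet (-1)).symm
  have hT0 : T 0 = (ρ (-1)).det • (V 2 - b (-1) • V 0) := by simpa using hTd (-1)
  have hT1 : T 1 = V 3 - b 0 • V 1 := by simpa [hnorm 0 le_rfl (by norm_num)] using hTd 0
  have hT2 : T 2 = V 4 - b 1 • V 2 := by simpa [hnorm 1 (by norm_num) (by norm_num)] using hTd 1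
  have hT3 : T 3 = V 5 - b 2 • V 3 := by simpa [hnorm 2 (by norm_num) (by norm_num)] using hTd 2
  have hV3 : V 3 = a 0 • V 2 + b 0 • V 1 + V 0 := by
    simpa [hc 0 le_rfl (by norm_num)] using hrec 0
  have hV5 : V 5 = a 2 • V 4 + b 2 • V 3 + V 2 := by
    simpa [hc 2 (by norm_num) le_rfl] using hrec 2
  have hA2 : T 3 - a 2 • T 2 = (1 + a 2 * b 1) • V 2 := by
    rw [hT3, hT2, hV5]
    module
  have hV2 : V 2 = (1 + a 0 * b (-1))⁻¹ • (b (-1) • T 1 + c (-1) • T 0) := by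
    have hA0V2 : b (-1) • T 1 + c (-1) • T 0 = (1 + a 0 * b (-1)) • V 2 := by
      rw [hT1, hT0, hV3, smul_smul, hcd]
      module
    rw [hA0V2, smul_smul, inv_mul_cancel₀ hA0, one_smul]
  calc T 3 = a 2 • T 2 + (1 + a 2 * b 1) • V 2 := by rw [← hA2]; abel
    _ = _ := by rw [hV2]; module

end Spiral

theorem coefficients_at_N_plus_one_general (N : ℕ) (hN : 5 ≤ N)
    (V : ℤ → Fin 3 → ℝ) (a b c : ℤ → ℝ)
    (hrec : ∀ j : ℤ, V (j + 3) = a j • V (j + 2) + b j • V (j + 1) + c j • V j)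
    (ρ : ℤ → Matrix (Fin 3) (Fin 3) ℝ)
    (hρ : ∀ j : ℤ, ρ j = colMat (V j) (V (j + 1)) (V (j + 2)))
    (hρinv : ∀ j : ℤ, IsUnit (ρ j))
    (M : Matrix (Fin 3) (Fin 3) ℝ)
    (T : ℤ → Fin 3 → ℝ)
    (hT : ∀ j : ℤ, T j =
      crossProduct (crossProduct (V (j - 1)) (V (j + 1))) (crossProduct (V j) (V (j + 2))))
    (hfwd : ∀ k : ℤ, 1 ≤ k → V ((N : ℤ) + k) = M.mulVec (T (k - 1)))
    (hnorm : ∀ j : ℤ, 0 ≤ j → j ≤ (N : ℤ) → (ρ j).det = 1)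
    (hA0 : 1 + a 0 * b (-1) ≠ 0) :
    a ((N : ℤ) + 1) = a 2 ∧
    b ((N : ℤ) + 1) = b (-1) * (1 + a 2 * b 1) / (1 + a 0 * b (-1)) ∧
    c ((N : ℤ) + 1) = c (-1) * (1 + a 2 * b 1) / (1 + a 0 * b (-1)) := by
  have hW : ∀ k : ℤ, 0 ≤ k → V (N + 1 + k) = M *ᵥ T k := fun k hk => by
    rw [add_assoc, hfwd (1 + k) (by omega), add_sub_cancel_left]
  have hW0 : V (N + 1) = M *ᵥ T 0 := by simpa using hW 0 le_rfl
  have hρN : ρ (N + 1) = M * colMat (T 0) (T 1) (T 2) := by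
    rw [hρ, mul_colMat_s8, hW0, hW 1 zero_le_one, hW 2 zero_le_two]
  obtain ⟨hM, hTind⟩ : IsUnit M.det ∧ IsUnit (colMat (T 0) (T 1) (T 2)).det := by
    rw [← IsUnit.mul_iff, ← det_mul, ← hρN, ← isUnit_iff_isUnit_det]
    exact hρinv _
  have hspiral : T 3 = a (N + 1) • T 2 + b (N + 1) • T 1 + c (N + 1) • T 0 := by
    apply mulVec_injective_iff_isUnit.mpr ((isUnit_iff_isUnit_det M).mpr hM)
    rw [mulVec_add, mulVec_add, mulVec_smul, mulVec_smul, mulVec_smul, ← hW 3 (by norm_num),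
      ← hW 2 zero_le_two, ← hW 1 zero_le_one, ← hW0]
    exact hrec (N + 1)
  have hlocal := T_three_eq_of_det_eq_one hrec hρ hT (fun j h0 _ => hnorm j h0 (by omega)) hA0
  exact coeffs_eq_of_isUnit_colMat ((isUnit_iff_isUnit_det _).mpr hTind) (hspiral.symm.trans hlocal)

/-- under the forward spiral condition and the normalization
`det ρ_j = 1` for `j = 0, …, N`, with `A₀ = 1 + a₀·b_{−1} ≠ 0` and
`A₂ = 1 + a₂·b₁`, the recursion coefficients at index `N+1` satisfy
`a_{N+1} = a₂`, `b_{N+1} = b_{−1}·A₂/A₀`, and `c_{N+1} = c_{−1}·A₂/A₀`. -/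
theorem coefficients_at_N_plus_one (N : ℕ) (hN : 5 ≤ N)
    (V : ℤ → Fin 3 → ℝ) (a b c : ℤ → ℝ)
    (hrec : ∀ j : ℤ, V (j + 3) = a j • V (j + 2) + b j • V (j + 1) + c j • V j)
    (ρ : ℤ → Matrix (Fin 3) (Fin 3) ℝ)
    (hρ : ∀ j : ℤ, ρ j = colMat (V j) (V (j + 1)) (V (j + 2)))
    (hρinv : ∀ j : ℤ, IsUnit (ρ j))
    (M : Matrix (Fin 3) (Fin 3) ℝ) (hM : M.det = 1)
    (T : ℤ → Fin 3 → ℝ)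
    (hT : ∀ j : ℤ, T j =
      crossProduct (crossProduct (V (j - 1)) (V (j + 1))) (crossProduct (V j) (V (j + 2))))
    (hfwd : ∀ k : ℤ, 1 ≤ k → V ((N : ℤ) + k) = M.mulVec (T (k - 1)))
    (hnorm : ∀ j : ℤ, 0 ≤ j → j ≤ (N : ℤ) → (ρ j).det = 1)
    (hA0 : 1 + a 0 * b (-1) ≠ 0) :
    a ((N : ℤ) + 1) = a 2 ∧
    b ((N : ℤ) + 1) = b (-1) * (1 + a 2 * b 1) / (1 + a 0 * b (-1)) ∧
    c ((N : ℤ) + 1) = c (-1) * (1 + a 2 * b 1) / (1 + a 0 * b (-1)) :=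
  coefficients_at_N_plus_one_general N hN V a b c hrec ρ hρ hρinv M T hT hfwd hnorm hA0
end
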